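/- Let n ≥ 1, d ≥ 2 be integers. Then Σ_{v∈ℤ/n} f_v = 0 in ℤ[x]/(x^n − 1), and the polynomials f_v with v ∈ ℤ/n, v ≠ 0, are linearly independent over ℚ in ℚ[x]/(x^n − 1). Consequently the sandpile group S(n,d) is a finite abelian group. -/

import Mathlib

open Polynomial Matrix

noncomputable section

/-- `Rq n` is the ring `ℤ[x]/(x^n - 1)`. -/
abbrev Rq (n : ℕ) : Type := Polynomial ℤ ⧸ Ideal.span ({X ^ n - 1} : Set (Polynomial ℤ))

/-- Projection `ℤ[x] → ℤ[x]/(x^n-1)`. -/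
def mkR (n : ℕ) : Polynomial ℤ →ₐ[ℤ] Rq n := Ideal.Quotient.mkₐ ℤ _

/-- Evaluation at 1, `ℤ[x]/(x^n-1) → ℤ`. -/
def evalOne (n : ℕ) : Rq n →ₐ[ℤ] ℤ :=
  Ideal.Quotient.liftₐ _ (aeval (1 : ℤ)) (by
    intro a ha
    have h : Ideal.span ({X ^ n - 1} : Set (Polynomial ℤ)) ≤
        RingHom.ker (aeval (1 : ℤ) : Polynomial ℤ →ₐ[ℤ] ℤ) := by
      rw [Ideal.span_le]
      rintro b ⟨rfl⟩
      simp [RingHom.mem_ker]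
    exact h ha)

/-- `𝒵_n`, the ℤ-submodule of elements of `ℤ[x]/(x^n-1)` vanishing at 1. -/
def Znd (n : ℕ) : Submodule ℤ (Rq n) := LinearMap.ker (evalOne n).toLinearMap

/-- `e_v = x^v - 1`. -/
def eR (n : ℕ) (v : ZMod n) : Rq n := mkR n (X ^ v.val - 1)

lemma eR_mem (n : ℕ) (v : ZMod n) : eR n v ∈ Znd n := by
  show evalOne n (mkR n (X ^ v.val - 1)) = 0
  exact (by simp : aeval (1 : ℤ) (X ^ v.val - 1 : Polynomial ℤ) = 0)

/-- `e_v` as an element of `𝒵_n`. -/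
def eZ (n : ℕ) (v : ZMod n) : Znd n := ⟨eR n v, eR_mem n v⟩

/-- `ε_v = d·e_v − e_{d·v}`. -/
def epsR (n d : ℕ) (v : ZMod n) : Rq n := (d : ℤ) • eR n v - eR n ((d : ZMod n) * v)

/-- `ℰ_{n,d}`: the ℤ-submodule generated by the `ε_v`, `v ≠ 0`. -/
def Esub (n d : ℕ) : Submodule ℤ (Rq n) :=
  Submodule.span ℤ {x | ∃ v : ZMod n, v ≠ 0 ∧ x = epsR n d v}

/-- The sand dune group `Σ(n,d) = 𝒵_n / ℰ_{n,d}` of `DB(n,d)`. -/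
abbrev SigmaGrp (n d : ℕ) : Type :=
  Znd n ⧸ (Esub n d).comap (Znd n).subtype

/-- Projection `𝒵_n → Σ(n,d)`. -/
def sigmaMk (n d : ℕ) (a : Znd n) : SigmaGrp n d := Submodule.Quotient.mk a

/-- `f_v = d·x^v − x^{d·v}(1 + x + ⋯ + x^{d−1})`. -/
def fR (n d : ℕ) (v : ZMod n) : Rq n :=
  mkR n ((d : Polynomial ℤ) * X ^ v.val -
    X ^ (((d : ZMod n) * v).val) * (∑ i ∈ Finset.range d, X ^ i))

/-- The `R`-span of the `f_v`, `v ≠ 0`, where `R = ℤ[x]/(x^n-1)`. -/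
def Fsub (n d : ℕ) : Submodule (Rq n) (Rq n) :=
  Submodule.span (Rq n) {x | ∃ v : ZMod n, v ≠ 0 ∧ x = fR n d v}

/-- The sandpile (critical) group `S(n,d)` of the generalized de Bruijn graph `DB(n,d)`:
the quotient of `𝒵_n` by the `R`-span of the `f_v`, `v ≠ 0`. -/
abbrev SGrp (n d : ℕ) : Type :=
  Znd n ⧸ ((Fsub n d).restrictScalars ℤ).comap (Znd n).subtype

/-- `RQn n` is the ring `ℚ[x]/(x^n - 1)`. -/
abbrev RQn (n : ℕ) : Type := Polynomial ℚ ⧸ Ideal.span ({X ^ n - 1} : Set (Polynomial ℚ))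

/-- Projection `ℚ[x] → ℚ[x]/(x^n-1)`. -/
def mkQ (n : ℕ) : Polynomial ℚ →ₐ[ℚ] RQn n := Ideal.Quotient.mkₐ ℚ _

/-- `e_v = x^v - 1` over `ℚ`. -/
def eQ (n : ℕ) (v : ZMod n) : RQn n := mkQ n (X ^ v.val - 1)

/-- `ε_v = d·e_v − e_{d·v}` over `ℚ`. -/
def epsQ (n d : ℕ) (v : ZMod n) : RQn n := (d : ℚ) • eQ n v - eQ n ((d : ZMod n) * v)

/-- `f_v = d·x^v − x^{d·v}(1 + x + ⋯ + x^{d−1})` over `ℚ`. -/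
def fQ (n d : ℕ) (v : ZMod n) : RQn n :=
  mkQ n ((d : Polynomial ℚ) * X ^ v.val -
    X ^ (((d : ZMod n) * v).val) * (∑ i ∈ Finset.range d, X ^ i))

/-!
Write `ξ` for the class of `x`. Then `f_v = d ξ^v - ∑_{i<d} ξ^(d v + i)` is the row of `v` in the
Laplacian of `DB(n,d)`, whose edges are `v → d v + i`. The map `(v, i) ↦ d v + i` is `d`-to-one
onto `ℤ/n`, so the rows sum to zero. Read in the group algebra `ℚ[ℤ/n]`, a relation
`∑ c_v f_v = 0` says that each `c_w` is the mean of `c` over the `d` edges ending at `w`. At a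
maximum of `c` this forces the same value at all in-neighbours, and every vertex reaches every
other one, so `c` is constant, hence zero when `c_0 = 0`. Over `ℤ` the `n - 1` independent
elements `f_v` (`v ≠ 0`) thus have full rank in `𝒵_n ≅ ℤ^(n-1)`, so the quotient `S(n,d)` is
finite.
-/

open Finset

theorem Finset.sum_range_mul_eq_sum_sum {M : Type*} [AddCommMonoid M] (f : ℕ → M) (m n : ℕ) :
    ∑ k ∈ range (m * n), f k = ∑ i ∈ range m, ∑ j ∈ range n, f (n * i + j) := by
  induction m with
  | zero => simp
  | succ m ih => rw [Nat.succ_mul, sum_range_add, ih, sum_range_succ, mul_comm n m]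

namespace ZMod

variable {n : ℕ} [NeZero n] {M : Type*} [AddCommMonoid M]

theorem sum_eq_sum_range (F : ZMod n → M) : ∑ v, F v = ∑ k ∈ range n, F k :=
  sum_nbij' val Nat.cast (by simp [ZMod.val_lt]) (by simp) (by simp)
    (fun k hk ↦ val_cast_of_lt (mem_range.1 hk)) (by simp)

theorem sum_sum_range_mul_add (F : ZMod n → M) (d : ℕ) :
    ∑ v, ∑ i ∈ range d, F (d * v + i) = d • ∑ v, F v := by
  have hperiod : ∀ q r : ℕ, F ((n * q + r : ℕ) : ZMod n) = F r := by simp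
  calc ∑ v, ∑ i ∈ range d, F (d * v + i)
      = ∑ k ∈ range (n * d), F k := by
        rw [sum_eq_sum_range, sum_range_mul_eq_sum_sum]; simp
    _ = ∑ q ∈ range d, ∑ r ∈ range n, F ((n * q + r : ℕ) : ZMod n) := by
        rw [mul_comm, sum_range_mul_eq_sum_sum]
    _ = d • ∑ v, F v := by simp_rw [hperiod, sum_eq_sum_range, sum_const, card_range]

end ZMod

namespace DeBruijn

section Harmonic

variable {n d : ℕ} [NeZero n] {G : Type*} [AddCommGroup G] [LinearOrder G] [IsOrderedAddMonoid G]

/-- `C w` is the mean of `C` over the `d` edges `v → d * v + i` (`i < d`) of `DB(n,d)` that end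
at `w`. -/
def IsHarmonic (d : ℕ) (C : ZMod n → G) : Prop :=
  ∀ w, d • C w = ∑ v, ∑ i ∈ range d, if (d : ZMod n) * v + i = w then C v else 0

variable {C : ZMod n → G} {M : G}

theorem IsHarmonic.apply_eq_of_apply_mul_add_eq (hC : IsHarmonic d C) (hmax : ∀ u, C u ≤ M)
    {v : ZMod n} {i : ℕ} (hi : i < d) (h : C (d * v + i) = M) : C v = M := by
  set w : ZMod n := d * v + i
  have hM : d • M = ∑ u, ∑ j ∈ range d, if (d : ZMod n) * u + j = w then M else 0 := by
    simpa using (ZMod.sum_sum_range_mul_add (fun u ↦ if u = w then M else 0) d).symm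
  have hsum : ∑ u, ∑ j ∈ range d, (if (d : ZMod n) * u + j = w then M - C u else 0) = 0 := by
    have hsplit : ∀ u (j : ℕ), (if (d : ZMod n) * u + j = w then M - C u else 0) =
        (if (d : ZMod n) * u + j = w then M else 0) - if (d : ZMod n) * u + j = w then C u else 0 :=
      fun u j ↦ by split_ifs <;> simp
    simp_rw [hsplit, sum_sub_distrib, ← hM, ← hC w, h, sub_self]
  have hnonneg (u : ZMod n) (j : ℕ) : 0 ≤ if (d : ZMod n) * u + j = w then M - C u else 0 := by
    split_ifs <;> simp [hmax u]
  have hv := (sum_eq_zero_iff_of_nonneg fun u _ ↦ sum_nonneg fun j _ ↦ hnonneg u j).1 hsum v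
    (mem_univ v)
  have hvi := (sum_eq_zero_iff_of_nonneg fun j _ ↦ hnonneg v j).1 hv i (mem_range.2 hi)
  simpa [w, sub_eq_zero, eq_comm] using hvi

theorem IsHarmonic.apply_eq_of_apply_pow_mul_add_eq (hC : IsHarmonic d C)
    (hmax : ∀ u, C u ≤ M) (k : ℕ) {u : ZMod n} {j : ℕ} (hj : j < d ^ k)
    (h : C (d ^ k * u + j) = M) : C u = M := by
  induction k generalizing u j with
  | zero => simpa [Nat.lt_one_iff.1 (pow_zero d ▸ hj)] using h
  | succ k ih =>
    have hd : 0 < d := Nat.pos_of_ne_zero fun hd ↦ by simp [hd] at hj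
    refine ih (j := j / d) ((Nat.div_lt_iff_lt_mul hd).2 (pow_succ d k ▸ hj))
      (hC.apply_eq_of_apply_mul_add_eq hmax (i := j % d) (Nat.mod_lt _ hd) ?_)
    have hj : (j : ZMod n) = d * (j / d : ℕ) + (j % d : ℕ) := by
      rw [← Nat.cast_mul, ← Nat.cast_add, Nat.div_add_mod]
    rw [← h, hj, pow_succ]
    ring_nf

/-- The maximum value spreads from a maximum point `w` back to every `u`, because
`d ^ n * u + j = w` for `j = (w - d ^ n * u).val < n ≤ d ^ n`. -/
theorem IsHarmonic.apply_eq_apply (hd : 2 ≤ d) (hC : IsHarmonic d C) (u v : ZMod n) :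
    C u = C v := by
  obtain ⟨w, -, hw⟩ := exists_max_image univ C univ_nonempty
  have hconst : ∀ u, C u = C w := fun u ↦ by
    refine hC.apply_eq_of_apply_pow_mul_add_eq (fun x ↦ hw x (mem_univ x)) n
      (j := (w - d ^ n * u).val) ?_ (by simp)
    calc (w - d ^ n * u).val < n := ZMod.val_lt _
      _ < 2 ^ n := Nat.lt_two_pow_self
      _ ≤ d ^ n := Nat.pow_le_pow_left hd n
  rw [hconst u, hconst v]

end Harmonic

end DeBruijn

theorem pow_val_natCast_of_pow_eq_one {M : Type*} [Monoid M] {n : ℕ} {ξ : M} (hξ : ξ ^ n = 1)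
    (m : ℕ) : ξ ^ (m : ZMod n).val = ξ ^ m := by
  rw [ZMod.val_natCast, ← pow_eq_pow_mod m hξ]

def quotXPowSubOneToAddMonoidAlgebra (R : Type*) [CommRing R] (n : ℕ) :
    R[X] ⧸ Ideal.span {(X ^ n - 1 : R[X])} →ₐ[R] AddMonoidAlgebra R (ZMod n) :=
  Ideal.Quotient.liftₐ _ (aeval (AddMonoidAlgebra.single 1 1)) fun p hp ↦ by
    obtain ⟨q, rfl⟩ := Ideal.mem_span_singleton'.1 hp
    simp [AddMonoidAlgebra.single_pow, AddMonoidAlgebra.one_def]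

namespace DeBruijn

def laplacianPoly (R : Type*) [CommRing R] (n d : ℕ) (v : ZMod n) : R[X] :=
  (d : R[X]) * X ^ v.val - X ^ ((d : ZMod n) * v).val * ∑ i ∈ range d, X ^ i

section Laplacian

variable {n d : ℕ} [NeZero n] {A : Type*} [CommRing A]

/-- `f_v` evaluated at `x = ξ`. -/
def laplacianRow (ξ : A) (d : ℕ) (v : ZMod n) : A :=
  d * ξ ^ v.val - ∑ i ∈ range d, ξ ^ ((d : ZMod n) * v + i).val

theorem sum_laplacianRow (ξ : A) (d : ℕ) : ∑ v : ZMod n, laplacianRow ξ d v = 0 := by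
  simp only [laplacianRow, sum_sub_distrib, ← mul_sum, nsmul_eq_mul, sub_self,
    ZMod.sum_sum_range_mul_add (fun a ↦ ξ ^ a.val)]

theorem aeval_laplacianPoly {R : Type*} [CommRing R] [Algebra R A] {ξ : A} (hξ : ξ ^ n = 1)
    (v : ZMod n) : aeval ξ (laplacianPoly R n d v) = laplacianRow ξ d v := by
  simp only [laplacianPoly, laplacianRow, map_sub, map_mul, map_natCast, map_pow, aeval_X,
    map_sum, mul_sum, ← pow_add]
  congr 1
  refine sum_congr rfl fun i _ ↦ ?_
  rw [← pow_val_natCast_of_pow_eq_one hξ]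
  push_cast [ZMod.natCast_val, ZMod.cast_id]
  rfl

theorem coeff_laplacianRow_single {k : Type*} [CommRing k] (v w : ZMod n) :
    (laplacianRow (AddMonoidAlgebra.single (1 : ZMod n) (1 : k)) d v).coeff w =
      d * (if v = w then 1 else 0) -
        ∑ i ∈ range d, if (d : ZMod n) * v + i = w then 1 else 0 := by
  simp [laplacianRow, ← nsmul_eq_mul, AddMonoidAlgebra.coeff_sum, Finsupp.single_apply]

theorem linearIndependent_laplacianRow_single {k : Type*} [Field k] [LinearOrder k]
    [IsStrictOrderedRing k] (hd : 2 ≤ d) :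
    LinearIndependent k (fun v : {v : ZMod n // v ≠ 0} ↦
      laplacianRow (AddMonoidAlgebra.single (1 : ZMod n) (1 : k)) d v.1) := by
  show LinearIndepOn k (laplacianRow _ d) {v | v ≠ 0}
  refine linearIndepOn_iff.2 fun l hl hl0 ↦ ?_
  have hC : IsHarmonic d l := fun w ↦ by
    have hw := congrArg (fun x ↦ x.coeff w) hl0
    rw [Finsupp.linearCombination_apply, Finsupp.sum_fintype _ _ (by simp)] at hw
    simp only [AddMonoidAlgebra.coeff_sum, Finsupp.finsetSum_apply,
      AddMonoidAlgebra.coeff_smul_apply, coeff_laplacianRow_single, smul_eq_mul, mul_sub,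
      mul_sum, mul_ite, mul_one, mul_zero, sum_sub_distrib, sum_ite_eq', mem_univ, if_true,
      AddMonoidAlgebra.coeff_zero, Finsupp.coe_zero, Pi.zero_apply] at hw
    rw [nsmul_eq_mul]
    linear_combination hw
  have hzero : l 0 = 0 := by
    by_contra h
    exact hl (Finsupp.mem_support_iff.2 h) rfl
  ext v
  rw [hC.apply_eq_apply hd v 0, hzero, Finsupp.coe_zero, Pi.zero_apply]

end Laplacian

end DeBruijn

open DeBruijn

theorem mkR_X_pow_eq_one (n : ℕ) : mkR n X ^ n = 1 := by
  rw [← map_pow, ← sub_eq_zero, ← map_one (mkR n), ← map_sub, mkR,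
    Ideal.Quotient.mkₐ_eq_mk, Ideal.Quotient.eq_zero_iff_mem]
  exact Ideal.subset_span rfl

def mapIntCast (n : ℕ) : Rq n →+* RQn n :=
  Ideal.quotientMap _ (mapRingHom (Int.castRingHom ℚ)) <| by
    rw [Ideal.span_singleton_le_iff_mem, Ideal.mem_comap]
    exact Ideal.subset_span (by simp)

theorem mapIntCast_fR (n d : ℕ) (v : ZMod n) : mapIntCast n (fR n d v) = fQ n d v := by
  simp [mapIntCast, fR, fQ, mkR, mkQ, Ideal.quotientMap_mk]

section SandpileGroup

variable {n d : ℕ} [NeZero n]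

theorem fR_eq_laplacianRow (v : ZMod n) : fR n d v = laplacianRow (mkR n X) d v := by
  rw [← aeval_laplacianPoly (R := ℤ) (mkR_X_pow_eq_one n), aeval_algHom_apply,
    aeval_X_left_apply]
  rfl

theorem sum_fR : ∑ v, fR n d v = 0 := by
  simp_rw [fR_eq_laplacianRow]
  exact sum_laplacianRow _ d

theorem fR_mem_Znd (v : ZMod n) : fR n d v ∈ Znd n := by
  show aeval (1 : ℤ) (laplacianPoly ℤ n d v) = 0
  simp [aeval_laplacianPoly (one_pow n), laplacianRow]

theorem quotXPowSubOneToAddMonoidAlgebra_fQ (v : ZMod n) :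
    quotXPowSubOneToAddMonoidAlgebra ℚ n (fQ n d v) =
      laplacianRow (AddMonoidAlgebra.single 1 1) d v :=
  aeval_laplacianPoly (by simp [AddMonoidAlgebra.single_pow, AddMonoidAlgebra.one_def]) v

theorem fQ_linearIndependent (hd : 2 ≤ d) :
    LinearIndependent ℚ (fun v : {v : ZMod n // v ≠ 0} ↦ fQ n d v.1) :=
  .of_comp (quotXPowSubOneToAddMonoidAlgebra ℚ n).toLinearMap <| by
    simpa [Function.comp_def, quotXPowSubOneToAddMonoidAlgebra_fQ]
      using linearIndependent_laplacianRow_single hd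

theorem fR_linearIndependent (hd : 2 ≤ d) :
    LinearIndependent ℤ (fun v : {v : ZMod n // v ≠ 0} ↦ fR n d v.1) :=
  .of_comp (mapIntCast n).toIntAlgHom.toLinearMap <| by
    simpa [Function.comp_def, mapIntCast_fR] using (fQ_linearIndependent hd).restrict_scalars' ℤ

theorem monic_X_pow_sub_one_int : (X ^ n - 1 : ℤ[X]).Monic := by
  simpa using monic_X_pow_sub_C (1 : ℤ) (NeZero.ne n)

instance : Module.Finite ℤ (Rq n) := (AdjoinRoot.powerBasis' monic_X_pow_sub_one_int).finite

instance : Module.Free ℤ (Rq n) :=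
  .of_basis (AdjoinRoot.powerBasis' monic_X_pow_sub_one_int).basis

theorem finrank_Rq : Module.finrank ℤ (Rq n) = n := by
  refine (AdjoinRoot.powerBasis' monic_X_pow_sub_one_int).finrank.trans ?_
  rw [AdjoinRoot.powerBasis'_dim]
  simpa using natDegree_X_pow_sub_C (n := n) (r := (1 : ℤ))

theorem finrank_Znd : Module.finrank ℤ (Znd n) = n - 1 := by
  have hsurj : Function.Surjective (evalOne n).toLinearMap :=
    fun m ↦ ⟨m, map_intCast (evalOne n) m⟩
  have hquot : Module.finrank ℤ (Rq n ⧸ Znd n) = 1 :=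
    ((evalOne n).toLinearMap.quotKerEquivOfSurjective hsurj).finrank_eq.trans
      (Module.finrank_self ℤ)
  have hadd := (Znd n).finrank_quotient_add_finrank
  rw [hquot, finrank_Rq] at hadd
  omega

theorem finite_SGrp (hd : 2 ≤ d) : Finite (SGrp n d) := by
  let N := ((Fsub n d).restrictScalars ℤ).comap (Znd n).subtype
  have hmem (v : {v : ZMod n // v ≠ 0}) : ⟨fR n d v, fR_mem_Znd v.1⟩ ∈ N :=
    show fR n d v ∈ Fsub n d from Submodule.subset_span ⟨v.1, v.2, rfl⟩
  have hindep : LinearIndependent ℤ (fun v ↦ (⟨_, hmem v⟩ : N)) :=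
    .of_comp ((Znd n).subtype ∘ₗ N.subtype) (fR_linearIndependent hd)
  refine N.finiteQuotientOfFreeOfRankEq (le_antisymm N.finrank_le ?_)
  calc Module.finrank ℤ (Znd n) = Fintype.card {v : ZMod n // v ≠ 0} := by
        simp [finrank_Znd, Fintype.card_subtype_compl, ZMod.card]
    _ ≤ Module.finrank ℤ N := hindep.fintype_card_le_finrank

end SandpileGroup

theorem fR_sum_zero_and_fQ_linearIndependent_general (n d : ℕ) (hd : 2 ≤ d) [NeZero n] :
    (∑ v : ZMod n, fR n d v = 0) ∧
    LinearIndependent ℚ (fun v : {v : ZMod n // v ≠ 0} => fQ n d v.val) ∧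
    Finite (SGrp n d) :=
  ⟨sum_fR, fQ_linearIndependent hd, finite_SGrp hd⟩

/-- Theorem: `Σ_v f_v = 0`, the `f_v` with `v ≠ 0` are linearly independent over `ℚ`,
and consequently `S(n,d)` is a finite (abelian) group. -/
theorem fR_sum_zero_and_fQ_linearIndependent (n d : ℕ) (hn : 1 ≤ n) (hd : 2 ≤ d) [NeZero n] :
    (∑ v : ZMod n, fR n d v = 0) ∧
    LinearIndependent ℚ (fun v : {v : ZMod n // v ≠ 0} => fQ n d v.val) ∧
    Finite (SGrp n d) :=
  fR_sum_zero_and_fQ_linearIndependent_general n d hd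

end
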